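/- If the colour permutation σ on m colours is a single m-cycle and m is odd, then any two triangulations T1, T2 of a convex polygon, each with all triangles given the same colour (the first colour in the cycle), are connected by a sequence of σ-flips: replacing each uncoloured flip in a flip sequence between T1 and T2 by m consecutive σ-flips at the same diagonal yields a valid σ-flip sequence. -/

import Mathlib

/-!
Every triangulation can be flipped, one diagonal at a time, to the fan at vertex `0`: the
diagonal of largest span avoiding `0` is the diagonal of a quadrilateral with a corner at `0`,
and flipping it creates a diagonal at `0`. An uncoloured flip lifts to `σ`-flips by flipping
the same quadrilateral `k` times with `k` odd and `(σ ^ k) c = c`: the diagonal alternates,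
the two triangles at it run through the colours `c, σ c, …, (σ ^ k) c = c`, and all other
triangles keep colour `c`. For an `m`-cycle `σ` one takes `k = m`.
-/

namespace PolyFlip


/-- Two vertices of the convex `N`-gon are consecutive along the boundary. -/
def BdryAdj (N : ℕ) (i j : Fin N) : Prop :=
  (i.val + 1) % N = j.val ∨ (j.val + 1) % N = i.val

/-- `d` is a diagonal of the convex `N`-gon: an unordered pair of distinct,
non-consecutive vertices. -/
def IsDiag (N : ℕ) (d : Finset (Fin N)) : Prop :=
  ∃ i j : Fin N, i ≠ j ∧ ¬ BdryAdj N i j ∧ d = {i, j}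

/-- The chord `d` crosses the chord `e` (in this orientation): the endpoints
interlace in the cyclic (here: linear) order of the polygon's vertices. -/
def Crosses {N : ℕ} (d e : Finset (Fin N)) : Prop :=
  ∃ a b c f : Fin N, d = {a, b} ∧ e = {c, f} ∧ a < c ∧ c < b ∧ b < f

/-- A triangulation of the convex `N`-gon: a maximal set of pairwise
non-crossing diagonals. -/
structure Triangulation (N : ℕ) where
  diags : Finset (Finset (Fin N))
  isDiag : ∀ d ∈ diags, IsDiag N d
  noncross : ∀ d ∈ diags, ∀ e ∈ diags, ¬ Crosses d e
  maximal : ∀ d, IsDiag N d → (∀ e ∈ diags, ¬ Crosses d e ∧ ¬ Crosses e d) → d ∈ diags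

/-- `a` and `b` are joined by an edge of the triangulated polygon:
either a boundary edge, or a diagonal of the triangulation. -/
def IsEdge {N : ℕ} (T : Triangulation N) (a b : Fin N) : Prop :=
  a ≠ b ∧ (BdryAdj N a b ∨ ({a, b} : Finset (Fin N)) ∈ T.diags)

/-- `t` is a triangle (face) of the triangulation `T`. -/
def IsTriangle {N : ℕ} (T : Triangulation N) (t : Finset (Fin N)) : Prop :=
  ∃ a b c : Fin N, a ≠ b ∧ a ≠ c ∧ b ≠ c ∧ t = {a, b, c} ∧
    IsEdge T a b ∧ IsEdge T a c ∧ IsEdge T b c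

/-- A coloured triangulation: a triangulation together with a colour in
`Fin m` for each of its triangles. -/
structure ColouredTri (N m : ℕ) where
  T : Triangulation N
  col : {t : Finset (Fin N) // IsTriangle T t} → Fin m

/-- The degree of a vertex `x` in the triangulated polygon. -/
noncomputable def degree {N : ℕ} (T : Triangulation N) (x : Fin N) : ℕ :=
  Nat.card {y : Fin N // IsEdge T x y}

/-- The `σ`-flip at the diagonal `d`: `d = {a,b}` is a diagonal of `C` whose two
incident triangles `{a,b,x}` and `{a,b,y}` have the same colour `i`; it is replaced by
the other diagonal `{x,y}` of the quadrilateral, the two new triangles `{a,x,y}` and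
`{b,x,y}` get colour `σ i`, and all other triangles keep their colours. -/
def SFlipAt {N m : ℕ} (σ : Equiv.Perm (Fin m)) (d : Finset (Fin N))
    (C C' : ColouredTri N m) : Prop :=
  ∃ (a b x y : Fin N) (h₁ : IsTriangle C.T {a, b, x}) (h₂ : IsTriangle C.T {a, b, y})
    (h₁' : IsTriangle C'.T {a, x, y}) (h₂' : IsTriangle C'.T {b, x, y}),
    d = {a, b} ∧ d ∈ C.T.diags ∧ x ≠ y ∧
    C.col ⟨{a, b, x}, h₁⟩ = C.col ⟨{a, b, y}, h₂⟩ ∧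
    C'.T.diags = insert {x, y} (C.T.diags.erase d) ∧
    C'.col ⟨{a, x, y}, h₁'⟩ = σ (C.col ⟨{a, b, x}, h₁⟩) ∧
    C'.col ⟨{b, x, y}, h₂'⟩ = σ (C.col ⟨{a, b, x}, h₁⟩) ∧
    ∀ (t : Finset (Fin N)) (ht : IsTriangle C.T t) (ht' : IsTriangle C'.T t),
      t ≠ {a, b, x} → t ≠ {a, b, y} → C'.col ⟨t, ht'⟩ = C.col ⟨t, ht⟩

/-- The `σ`-flip relation. -/
def SFlip {N m : ℕ} (σ : Equiv.Perm (Fin m)) (C C' : ColouredTri N m) : Prop :=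
  ∃ d, SFlipAt σ d C C'

/-- The 2-coloured flip at a diagonal (the colour permutation swaps the two colours). -/
abbrev Flip2At {N : ℕ} (d : Finset (Fin N)) (C C' : ColouredTri N 2) : Prop :=
  SFlipAt (finRotate 2) d C C'

/-- The 2-coloured flip relation. -/
abbrev Flip2 {N : ℕ} (C C' : ColouredTri N 2) : Prop :=
  SFlip (finRotate 2) C C'

/-- The 2-coloured flip graph of the convex `N`-gon: vertices are the 2-coloured
triangulations, edges are single 2-coloured flips. -/
def flipGraph (N : ℕ) : SimpleGraph (ColouredTri N 2) where
  Adj C C' := C ≠ C' ∧ (Flip2 C C' ∨ Flip2 C' C)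
  symm := ⟨fun C C' h => ⟨h.1.symm, h.2.symm⟩⟩
  loopless := ⟨fun C h => h.1 rfl⟩

/-- The sign (`+1` for colour `0`, `-1` for colour `1`) of a colour, in `ZMod 3`. -/
def signVal (c : Fin 2) : ZMod 3 := if c = 0 then 1 else -1

/-- The weight of a vertex `x`: the sum, modulo 3, of the signs of all triangles
incident with `x`. -/
noncomputable def weight {N : ℕ} (C : ColouredTri N 2) (x : Fin N) : ZMod 3 :=
  ∑ᶠ t : {t : Finset (Fin N) // IsTriangle C.T t},
    if x ∈ t.val then signVal (C.col t) else 0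

/-- The number of triangles coloured `+1` (colour `0`). -/
noncomputable def plusCount {N : ℕ} (C : ColouredTri N 2) : ℕ :=
  Nat.card {t : {t : Finset (Fin N) // IsTriangle C.T t} // C.col t = 0}

/-- Adjacency in the `k`-dimensional hypercube: the two vertices differ in
exactly one coordinate. -/
def cubeAdj (k : ℕ) (u v : Fin k → Bool) : Prop := ∃! i, u i ≠ v i

/-- The `k`-dimensional hypercube graph on `{0,1}^k`. -/
def cubeGraph (k : ℕ) : SimpleGraph (Fin k → Bool) where
  Adj := cubeAdj k
  symm := by
    constructor
    rintro u v ⟨i, hi, hu⟩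
    exact ⟨i, hi.symm, fun j hj => hu j hj.symm⟩
  loopless := by
    constructor
    rintro u ⟨i, hi, -⟩
    exact hi rfl

/-- `f` exhibits a `k`-dimensional hypercube inside the connected component of `C`
in the 2-coloured flip graph. -/
def CubeEmb {N : ℕ} (C : ColouredTri N 2) (k : ℕ)
    (f : (Fin k → Bool) → ColouredTri N 2) : Prop :=
  Function.Injective f ∧
  (∀ u v, cubeAdj k u v → (flipGraph N).Adj (f u) (f v)) ∧
  ∀ u, (flipGraph N).Reachable C (f u)

/-- `G` contains a subdivision (topological copy) of `H`: there are branch vertices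
`f w` for the vertices `w` of `H` and internally disjoint paths in `G` between them
realising the edges of `H`. -/
def ContainsSubdivision {V W : Type*} (G : SimpleGraph V) (H : SimpleGraph W) : Prop :=
  ∃ f : W → V, Function.Injective f ∧
    ∃ P : ∀ u v : W, H.Adj u v → G.Walk (f u) (f v),
      (∀ u v (h : H.Adj u v), (P u v h).IsPath) ∧
      (∀ u v (h : H.Adj u v) (w : W), f w ∈ (P u v h).support → w = u ∨ w = v) ∧
      (∀ u₁ v₁ (h₁ : H.Adj u₁ v₁) u₂ v₂ (h₂ : H.Adj u₂ v₂),
        (s(u₁, v₁) : Sym2 W) ≠ s(u₂, v₂) →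
        ∀ x, x ∈ (P u₁ v₁ h₁).support → x ∈ (P u₂ v₂ h₂).support →
          (x = f u₁ ∨ x = f v₁) ∧ (x = f u₂ ∨ x = f v₂))

/-- Planarity, via Kuratowski's characterisation: a graph is planar iff it contains
no subdivision of `K₅` and no subdivision of `K₃,₃`. -/
def IsPlanar {V : Type*} (G : SimpleGraph V) : Prop :=
  ¬ ContainsSubdivision G (SimpleGraph.completeGraph (Fin 5)) ∧
  ¬ ContainsSubdivision G (completeBipartiteGraph (Fin 3) (Fin 3))

open Finset Relation

variable {N : ℕ}

theorem bdryAdj_iff {i j : Fin N} :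
    BdryAdj N i j ↔ i.val + 1 = j.val ∨ (i.val + 1 = N ∧ j.val = 0) ∨
      j.val + 1 = i.val ∨ (j.val + 1 = N ∧ i.val = 0) := by
  have key : ∀ k l : Fin N, (k.val + 1) % N = l.val ↔
      k.val + 1 = l.val ∨ (k.val + 1 = N ∧ l.val = 0) := by
    intro k l
    obtain h | h : k.val + 1 < N ∨ k.val + 1 = N := by omega
    · rw [Nat.mod_eq_of_lt h]; omega
    · rw [h, Nat.mod_self]; omega
  rw [BdryAdj, key, key]
  tauto

theorem BdryAdj.symm {i j : Fin N} (h : BdryAdj N i j) : BdryAdj N j i := Or.symm h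

theorem pair_eq_pair_iff_of_lt {s t a b : Fin N} (hst : s < t) (hab : a < b) :
    ({s, t} : Finset (Fin N)) = {a, b} ↔ s = a ∧ t = b := by
  refine ⟨fun h => ?_, fun h => h.1 ▸ h.2 ▸ rfl⟩
  have hs : s ∈ ({a, b} : Finset (Fin N)) := h ▸ mem_insert_self s {t}
  have ht : t ∈ ({a, b} : Finset (Fin N)) := h ▸ by simp
  simp only [mem_insert, mem_singleton] at hs ht
  omega

theorem crosses_pair_iff {u v p q : Fin N} (huv : u < v) (hpq : p < q) :
    Crosses ({u, v} : Finset (Fin N)) {p, q} ↔ u < p ∧ p < v ∧ v < q := by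
  constructor
  · rintro ⟨a, b, c, f, h₁, h₂, hac, hcb, hbf⟩
    obtain ⟨rfl, rfl⟩ := (pair_eq_pair_iff_of_lt huv (hac.trans hcb)).1 h₁
    obtain ⟨rfl, rfl⟩ := (pair_eq_pair_iff_of_lt hpq (hcb.trans hbf)).1 h₂
    exact ⟨hac, hcb, hbf⟩
  · rintro ⟨h₁, h₂, h₃⟩
    exact ⟨u, v, p, q, rfl, rfl, h₁, h₂, h₃⟩

theorem not_crosses_of_mem {z : Fin N} {d e : Finset (Fin N)} (hd : z ∈ d) (he : z ∈ e) :
    ¬ Crosses d e := by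
  rintro ⟨a, b, c, f, rfl, rfl, hac, hcb, hbf⟩
  simp only [mem_insert, mem_singleton] at hd he
  omega

def Interlaced (d e : Finset (Fin N)) : Prop := Crosses d e ∨ Crosses e d

theorem Interlaced.symm {d e : Finset (Fin N)} (h : Interlaced d e) : Interlaced e d :=
  Or.symm h

theorem interlaced_pair_iff {u v p q : Fin N} (huv : u < v) (hpq : p < q) :
    Interlaced ({u, v} : Finset (Fin N)) {p, q} ↔
      (u < p ∧ p < v ∧ v < q) ∨ (p < u ∧ u < q ∧ q < v) := by
  rw [Interlaced, crosses_pair_iff huv hpq, crosses_pair_iff hpq huv]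

theorem not_interlaced_of_mem {z : Fin N} {d e : Finset (Fin N)} (hd : z ∈ d) (he : z ∈ e) :
    ¬ Interlaced d e := by
  rintro (h | h)
  exacts [not_crosses_of_mem hd he h, not_crosses_of_mem he hd h]

theorem not_interlaced_of_bdryAdj {s t p q : Fin N} (hst : s < t) (hpq : p < q)
    (h : BdryAdj N s t) : ¬ Interlaced {s, t} {p, q} := by
  rw [interlaced_pair_iff hst hpq]
  rw [bdryAdj_iff] at h
  omega

theorem IsDiag.exists_lt {d : Finset (Fin N)} (h : IsDiag N d) :
    ∃ p q : Fin N, p < q ∧ ¬ BdryAdj N p q ∧ d = {p, q} := by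
  obtain ⟨i, j, hne, hb, rfl⟩ := h
  rcases hne.lt_or_gt with h | h
  · exact ⟨i, j, h, hb, rfl⟩
  · exact ⟨j, i, h, fun h' => hb h'.symm, pair_comm i j⟩

namespace Triangulation

theorem ext {T₁ T₂ : Triangulation N} (h : T₁.diags = T₂.diags) : T₁ = T₂ := by
  cases T₁; cases T₂; cases h; rfl

theorem ne_and_not_bdryAdj_of_mem (T : Triangulation N) {a b : Fin N}
    (h : {a, b} ∈ T.diags) : a ≠ b ∧ ¬ BdryAdj N a b := by
  obtain ⟨p, q, hpq, hb, he⟩ := (T.isDiag _ h).exists_lt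
  have ha : a ∈ ({p, q} : Finset (Fin N)) := he ▸ mem_insert_self a {b}
  have hb' : b ∈ ({p, q} : Finset (Fin N)) := he ▸ by simp
  have hp : p ∈ ({a, b} : Finset (Fin N)) := he ▸ mem_insert_self p {q}
  have hq : q ∈ ({a, b} : Finset (Fin N)) := he ▸ by simp
  simp only [mem_insert, mem_singleton] at ha hb' hp hq
  rcases ha with rfl | rfl <;> rcases hb' with rfl | rfl
  · omega
  · exact ⟨hpq.ne, hb⟩
  · exact ⟨hpq.ne', fun h => hb h.symm⟩
  · omega

end Triangulation

theorem IsEdge.symm {T : Triangulation N} {u v : Fin N} (h : IsEdge T u v) : IsEdge T v u :=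
  ⟨h.1.symm, h.2.imp BdryAdj.symm fun h => pair_comm u v ▸ h⟩

theorem isEdge_iff_of_lt (T : Triangulation N) {u v : Fin N} (huv : u < v) :
    IsEdge T u v ↔ ∀ e ∈ T.diags, ¬ Interlaced {u, v} e := by
  constructor
  · rintro ⟨-, hb | hd⟩ e he
    · obtain ⟨p, q, hpq, -, rfl⟩ := (T.isDiag e he).exists_lt
      exact not_interlaced_of_bdryAdj huv hpq hb
    · rintro (h | h)
      exacts [T.noncross _ hd _ he h, T.noncross _ he _ hd h]
  · intro h
    refine ⟨huv.ne, or_iff_not_imp_left.2 fun hb => T.maximal _ ⟨u, v, huv.ne, hb, rfl⟩ ?_⟩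
    exact fun e he => ⟨fun hc => h e he (Or.inl hc), fun hc => h e he (Or.inr hc)⟩

theorem IsTriangle.of_isEdge {T : Triangulation N} {a b c : Fin N} (hab : IsEdge T a b)
    (hac : IsEdge T a c) (hbc : IsEdge T b c) : IsTriangle T {a, b, c} :=
  ⟨a, b, c, hab.1, hac.1, hbc.1, rfl, hab, hac, hbc⟩

theorem IsTriangle.isEdge {T : Triangulation N} {t : Finset (Fin N)} (h : IsTriangle T t)
    {u v : Fin N} (hu : u ∈ t) (hv : v ∈ t) (huv : u ≠ v) : IsEdge T u v := by
  obtain ⟨a, b, c, -, -, -, rfl, hab, hac, hbc⟩ := h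
  simp only [mem_insert, mem_singleton] at hu hv
  rcases hu with rfl | rfl | rfl <;> rcases hv with rfl | rfl | rfl <;>
    first | exact absurd rfl huv | assumption | exact IsEdge.symm ‹_›

namespace Triangulation

section Flip

variable {T T' : Triangulation N} {a b x y : Fin N}

structure IsFlip (T T' : Triangulation N) (a b x y : Fin N) : Prop where
  mem : {a, b} ∈ T.diags
  ne : x ≠ y
  diags_eq : T'.diags = insert {x, y} (T.diags.erase {a, b})
  not_isEdge : ¬ IsEdge T x y
  isTriangle_left : IsTriangle T {x, a, b}
  isTriangle_right : IsTriangle T {y, a, b}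
  isTriangle_left' : IsTriangle T' {a, x, y}
  isTriangle_right' : IsTriangle T' {b, x, y}

theorem IsFlip.not_isEdge' (F : IsFlip T T' a b x y) : ¬ IsEdge T' a b := by
  rintro ⟨-, hb | hd⟩
  · exact (T.ne_and_not_bdryAdj_of_mem F.mem).2 hb
  rw [F.diags_eq, mem_insert] at hd
  rcases hd with hd | hd
  · exact F.not_isEdge ⟨F.ne, Or.inr (hd ▸ F.mem)⟩
  · exact notMem_erase _ _ hd

theorem IsFlip.symm (F : IsFlip T T' a b x y) : IsFlip T' T x y a b where
  mem := F.diags_eq ▸ mem_insert_self _ _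
  ne := (T.ne_and_not_bdryAdj_of_mem F.mem).1
  diags_eq := by
    rw [F.diags_eq, erase_insert, insert_erase F.mem]
    exact fun h => F.not_isEdge ⟨F.ne, Or.inr (mem_of_mem_erase h)⟩
  not_isEdge := F.not_isEdge'
  isTriangle_left := F.isTriangle_left'
  isTriangle_right := F.isTriangle_right'
  isTriangle_left' := F.isTriangle_left
  isTriangle_right' := F.isTriangle_right

def Flip (T T' : Triangulation N) : Prop := ∃ a b x y, IsFlip T T' a b x y

instance : Std.Symm (Flip (N := N)) :=
  ⟨fun _ _ ⟨a, b, x, y, F⟩ => ⟨x, y, a, b, F.symm⟩⟩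

end Flip

section Lift

variable {m : ℕ} {T T' : Triangulation N} {a b x y : Fin N}

def colourAt (T : Triangulation N) (d : Finset (Fin N)) (i c : Fin m) :
    {t : Finset (Fin N) // IsTriangle T t} → Fin m :=
  fun t => if d ⊆ t.1 then i else c

theorem colourAt_self (T : Triangulation N) (d : Finset (Fin N)) (c : Fin m) :
    colourAt T d c c = fun _ => c := by
  funext t
  exact ite_self c

theorem IsFlip.sflipAt (F : T.IsFlip T' a b x y) (σ : Equiv.Perm (Fin m))
    (i c : Fin m) :
    SFlipAt σ {a, b} ⟨T, colourAt T {a, b} i c⟩ ⟨T', colourAt T' {x, y} (σ i) c⟩ := by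
  have rot : ∀ v : Fin N, ({a, b, v} : Finset (Fin N)) = {v, a, b} := fun v => by
    rw [pair_comm b v, insert_comm]
  refine ⟨a, b, x, y, rot x ▸ F.isTriangle_left, rot y ▸ F.isTriangle_right,
    F.isTriangle_left', F.isTriangle_right', rfl, F.mem, F.ne, ?_, F.diags_eq, ?_, ?_, ?_⟩
  iterate 3 simp [colourAt]
  intro t ht ht' _ _
  simp only [colourAt]
  rw [if_neg fun h => F.not_isEdge (ht.isEdge (h (by simp)) (h (by simp)) F.ne),
    if_neg fun h => F.not_isEdge' (ht'.isEdge (h (by simp)) (h (by simp))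
      (T.ne_and_not_bdryAdj_of_mem F.mem).1)]

theorem IsFlip.reflTransGen_sflip (F : T.IsFlip T' a b x y)
    {σ : Equiv.Perm (Fin m)} {c : Fin m} {k : ℕ} (hk : Odd k) (hσ : (σ ^ k) c = c) :
    ReflTransGen (SFlip σ) ⟨T, fun _ => c⟩ ⟨T', fun _ => c⟩ := by
  have back_and_forth : ∀ j, ReflTransGen (SFlip σ)
      ⟨T, colourAt T {a, b} c c⟩ ⟨T, colourAt T {a, b} ((σ ^ (2 * j)) c) c⟩ := by
    intro j
    induction j with
    | zero => rfl
    | succ j ih =>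
      have h := (ih.tail ⟨_, F.sflipAt σ _ c⟩).tail ⟨_, F.symm.sflipAt σ _ c⟩
      rwa [mul_add, mul_one, add_comm, pow_add, sq, Equiv.Perm.mul_apply, Equiv.Perm.mul_apply]
  obtain ⟨j, rfl⟩ := hk
  have h := (back_and_forth j).tail ⟨_, F.sflipAt σ _ c⟩
  rwa [← Equiv.Perm.mul_apply, ← pow_succ', hσ, colourAt_self, colourAt_self] at h

end Lift

section Quadrilateral

structure IsQuad (T : Triangulation N) (u a x b : Fin N) : Prop where
  lt_ua : u < a
  lt_ax : a < x
  lt_xb : x < b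
  mem : {a, b} ∈ T.diags
  edge_ua : IsEdge T u a
  edge_ax : IsEdge T a x
  edge_xb : IsEdge T x b
  edge_ub : IsEdge T u b

variable {T : Triangulation N} {u a x b : Fin N}

theorem IsQuad.exists_side (Q : IsQuad T u a x b) {p q : Fin N} (hpq : p < q)
    (h : Interlaced {u, x} {p, q} ∨ Interlaced {a, b} {p, q}) :
    ({p, q} : Finset (Fin N)) = {u, x} ∨ ({p, q} : Finset (Fin N)) = {a, b} ∨
      ∃ s t, s < t ∧ IsEdge T s t ∧ ({s, t} : Finset (Fin N)) ≠ {a, b} ∧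
        Interlaced {s, t} {p, q} := by
  obtain ⟨hua, hax, hxb, -, eua, eax, exb, eub⟩ := Q
  have side : ∀ s t, s < t → IsEdge T s t → (s ≠ a ∨ t ≠ b) →
      ((s < p ∧ p < t ∧ t < q) ∨ (p < s ∧ s < q ∧ q < t)) →
      ∃ s t, s < t ∧ IsEdge T s t ∧ ({s, t} : Finset (Fin N)) ≠ {a, b} ∧
        Interlaced {s, t} {p, q} := fun s t hst e hne hi =>
    ⟨s, t, hst, e, by rwa [Ne, pair_eq_pair_iff_of_lt hst (hax.trans hxb), not_and_or],
      (interlaced_pair_iff hst hpq).2 hi⟩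
  rw [pair_eq_pair_iff_of_lt hpq (hua.trans hax), pair_eq_pair_iff_of_lt hpq (hax.trans hxb)]
  rw [interlaced_pair_iff (hua.trans hax) hpq, interlaced_pair_iff (hax.trans hxb) hpq] at h
  by_cases h₁ : (u < p ∧ p < a ∧ a < q) ∨ (p < u ∧ u < q ∧ q < a)
  · exact Or.inr (Or.inr (side u a hua eua (by omega) h₁))
  by_cases h₂ : (a < p ∧ p < x ∧ x < q) ∨ (p < a ∧ a < q ∧ q < x)
  · exact Or.inr (Or.inr (side a x hax eax (by omega) h₂))
  by_cases h₃ : (x < p ∧ p < b ∧ b < q) ∨ (p < x ∧ x < q ∧ q < b)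
  · exact Or.inr (Or.inr (side x b hxb exb (by omega) h₃))
  by_cases h₄ : (u < p ∧ p < b ∧ b < q) ∨ (p < u ∧ u < q ∧ q < b)
  · exact Or.inr (Or.inr (side u b (hua.trans (hax.trans hxb)) eub (by omega) h₄))
  omega

theorem IsQuad.not_interlaced (Q : IsQuad T u a x b) {e : Finset (Fin N)} (he : e ∈ T.diags)
    (hne : e ≠ {a, b}) : ¬ Interlaced {u, x} e := by
  obtain ⟨p, q, hpq, -, rfl⟩ := (T.isDiag e he).exists_lt
  intro h
  rcases Q.exists_side hpq (Or.inl h) with h' | h' | ⟨s, t, hst, hedge, -, hi⟩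
  · exact not_interlaced_of_mem (mem_insert_self u {x}) (by rw [h']; exact mem_insert_self u {x}) h
  · exact hne h'
  · exact (isEdge_iff_of_lt T hst).1 hedge _ he hi

theorem IsQuad.noncross_flip (Q : IsQuad T u a x b) :
    ∀ d ∈ insert {x, u} (T.diags.erase {a, b}), ∀ e ∈ insert {x, u} (T.diags.erase {a, b}),
      ¬ Crosses d e := by
  intro d hd e he
  rw [pair_comm] at hd he
  rcases mem_insert.1 hd with rfl | hd <;> rcases mem_insert.1 he with rfl | he
  · exact not_crosses_of_mem (mem_insert_self u {x}) (mem_insert_self u {x})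
  · exact fun h => Q.not_interlaced (mem_of_mem_erase he) (ne_of_mem_erase he) (Or.inl h)
  · exact fun h => Q.not_interlaced (mem_of_mem_erase hd) (ne_of_mem_erase hd) (Or.inr h)
  · exact T.noncross _ (mem_of_mem_erase hd) _ (mem_of_mem_erase he)

theorem IsQuad.maximal_flip (Q : IsQuad T u a x b) (f : Finset (Fin N)) (hf : IsDiag N f)
    (hcross : ∀ e ∈ insert {x, u} (T.diags.erase {a, b}), ¬ Crosses f e ∧ ¬ Crosses e f) :
    f ∈ insert {x, u} (T.diags.erase {a, b}) := by
  obtain ⟨p, q, hpq, -, rfl⟩ := hf.exists_lt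
  have hi : ∀ e ∈ insert {x, u} (T.diags.erase {a, b}), ¬ Interlaced {p, q} e :=
    fun e he h => h.elim (hcross e he).1 (hcross e he).2
  have hab : a < b := Q.lt_ax.trans Q.lt_xb
  by_cases hfab : Interlaced {a, b} {p, q}
  · rcases Q.exists_side hpq (Or.inr hfab) with
      h | h | ⟨s, t, hst, ⟨-, hb | hd⟩, hne, hst'⟩
    · rw [h, pair_comm]; exact mem_insert_self _ _
    · exact absurd hfab
        (not_interlaced_of_mem (mem_insert_self a {b}) (by rw [h]; exact mem_insert_self a {b}))
    · exact absurd hst' (not_interlaced_of_bdryAdj hst hpq hb)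
    · exact absurd hst'.symm (hi _ (mem_insert_of_mem (mem_erase.2 ⟨hne, hd⟩)))
  · have hux : Interlaced {a, b} {x, u} :=
      Or.inr (pair_comm u x ▸ ⟨u, x, a, b, rfl, rfl, Q.lt_ua, Q.lt_ax, Q.lt_xb⟩)
    have hne : ({p, q} : Finset (Fin N)) ≠ {a, b} :=
      fun h => hi _ (mem_insert_self _ _) (h ▸ hux)
    refine mem_insert_of_mem (mem_erase.2 ⟨hne, T.maximal _ hf fun e he => ?_⟩)
    by_cases hea : e = {a, b}
    · subst hea
      exact ⟨fun h => hfab (Or.inr h), fun h => hfab (Or.inl h)⟩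
    · exact hcross e (mem_insert_of_mem (mem_erase.2 ⟨hea, he⟩))

theorem IsQuad.isDiag_flip (Q : IsQuad T u a x b) : IsDiag N {x, u} := by
  obtain ⟨hua, hax, hxb, -⟩ := Q
  refine ⟨x, u, (hua.trans hax).ne', ?_, rfl⟩
  rw [bdryAdj_iff]
  omega

def IsQuad.flip (Q : IsQuad T u a x b) : Triangulation N where
  diags := insert {x, u} (T.diags.erase {a, b})
  isDiag d hd :=
    (mem_insert.1 hd).elim (· ▸ Q.isDiag_flip) fun hd => T.isDiag d (mem_of_mem_erase hd)
  noncross := Q.noncross_flip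
  maximal := Q.maximal_flip

theorem IsQuad.isEdge_flip (Q : IsQuad T u a x b) {s t : Fin N} (h : IsEdge T s t)
    (hne : ({s, t} : Finset (Fin N)) ≠ {a, b}) : IsEdge Q.flip s t :=
  ⟨h.1, h.2.imp_right fun hd => mem_insert_of_mem (mem_erase.2 ⟨hne, hd⟩)⟩

theorem IsQuad.isFlip (Q : IsQuad T u a x b) : IsFlip T Q.flip a b x u := by
  obtain ⟨hua, hax, hxb, hmem, eua, eax, exb, eub⟩ := id Q
  have eab : IsEdge T a b := ⟨(hax.trans hxb).ne, Or.inr hmem⟩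
  have exu : IsEdge Q.flip x u := ⟨(hua.trans hax).ne', Or.inr (mem_insert_self _ _)⟩
  have transfer : ∀ s t, IsEdge T s t → (s ≠ a ∧ s ≠ b ∨ t ≠ a ∧ t ≠ b) →
      IsEdge Q.flip s t := by
    intro s t hst hv
    refine Q.isEdge_flip hst fun h => ?_
    have hs : s ∈ ({a, b} : Finset (Fin N)) := h ▸ mem_insert_self s {t}
    have ht : t ∈ ({a, b} : Finset (Fin N)) := h ▸ by simp
    simp only [mem_insert, mem_singleton] at hs ht
    omega
  refine ⟨hmem, exu.1, rfl, fun h => ?_, .of_isEdge eax.symm exb eab, .of_isEdge eua eub eab,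
    .of_isEdge (transfer a x eax (by omega)) (transfer a u eua.symm (by omega)) exu,
    .of_isEdge (transfer b x exb.symm (by omega)) (transfer b u eub.symm (by omega)) exu⟩
  refine (isEdge_iff_of_lt T (hua.trans hax)).1 h.symm _ hmem ?_
  exact Or.inl ⟨u, x, a, b, rfl, rfl, hua, hax, hxb⟩

end Quadrilateral

section Fan

theorem eq_of_forall_mem {z : Fin N} {T₁ T₂ : Triangulation N}
    (h₁ : ∀ d ∈ T₁.diags, z ∈ d) (h₂ : ∀ d ∈ T₂.diags, z ∈ d) : T₁ = T₂ := by
  have subset : ∀ T T' : Triangulation N, (∀ d ∈ T.diags, z ∈ d) →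
      (∀ d ∈ T'.diags, z ∈ d) → T.diags ⊆ T'.diags := fun T T' h h' d hd =>
    T'.maximal d (T.isDiag d hd) fun e he =>
      ⟨not_crosses_of_mem (h d hd) (h' e he), not_crosses_of_mem (h' e he) (h d hd)⟩
  exact ext ((subset T₁ T₂ h₁ h₂).antisymm (subset T₂ T₁ h₂ h₁))

theorem exists_apex (T : Triangulation N) {a b : Fin N} (hab : a.val + 1 < b.val)
    (hmem : {a, b} ∈ T.diags) : ∃ x, a < x ∧ x < b ∧ IsEdge T a x ∧ IsEdge T x b := by
  classical
  set S := univ.filter fun v => a < v ∧ v < b ∧ IsEdge T a v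
  have hS : S.Nonempty := by
    refine ⟨⟨a + 1, by omega⟩, mem_filter.2 ⟨mem_univ _, by simp [Fin.lt_def],
      by simp [Fin.lt_def]; omega, by simp [Fin.ext_iff], Or.inl (bdryAdj_iff.2 (Or.inl rfl))⟩⟩
  obtain ⟨-, hax, hxb, eax⟩ := mem_filter.1 (S.max'_mem hS)
  refine ⟨_, hax, hxb, eax, (isEdge_iff_of_lt T hxb).2 fun e he hi => ?_⟩
  obtain ⟨p, q, hpq, -, rfl⟩ := (T.isDiag e he).exists_lt
  have hab' := (isEdge_iff_of_lt T (hax.trans hxb)).1 ⟨(hax.trans hxb).ne, Or.inr hmem⟩ _ he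
  have hax' := (isEdge_iff_of_lt T hax).1 eax _ he
  rw [interlaced_pair_iff hxb hpq] at hi
  rw [interlaced_pair_iff (hax.trans hxb) hpq] at hab'
  rw [interlaced_pair_iff hax hpq] at hax'
  obtain rfl | hpa := eq_or_ne p a
  · have := S.le_max' q (mem_filter.2 ⟨mem_univ _, hpq, by omega, hpq.ne, Or.inr he⟩)
    omega
  · omega

variable {n : ℕ} {T : Triangulation (n + 1)}

theorem isEdge_zero_of_maxSpan {a b : Fin (n + 1)} (ha : 0 < a) (hab : a < b)
    (hmem : {a, b} ∈ T.diags)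
    (hmax : ∀ p q, p < q → {p, q} ∈ T.diags → 0 < p → q.val - p.val ≤ b.val - a.val) :
    IsEdge T 0 a ∧ IsEdge T 0 b := by
  suffices h : ∀ v, v = a ∨ v = b → IsEdge T 0 v from ⟨h a (.inl rfl), h b (.inr rfl)⟩
  have := Fin.val_zero (n + 1)
  intro v hv
  refine (isEdge_iff_of_lt T (by omega)).2 fun e he hi => ?_
  obtain ⟨p, q, hpq, -, rfl⟩ := (T.isDiag e he).exists_lt
  have hab' := (isEdge_iff_of_lt T hab).1 ⟨hab.ne, Or.inr hmem⟩ _ he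
  rw [interlaced_pair_iff (by omega) hpq] at hi
  rw [interlaced_pair_iff hab hpq] at hab'
  have := hmax p q hpq he (by omega)
  omega

theorem exists_flip_card_lt {d : Finset (Fin (n + 1))} (hd : d ∈ T.diags) (h0 : 0 ∉ d) :
    ∃ T', Flip T T' ∧ (T'.diags.filter (0 ∉ ·)).card < (T.diags.filter (0 ∉ ·)).card := by
  set S := (univ : Finset (Fin (n + 1) × Fin (n + 1))).filter
    fun pq => pq.1 < pq.2 ∧ {pq.1, pq.2} ∈ T.diags ∧ 0 < pq.1
  have := Fin.val_zero (n + 1)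
  obtain ⟨p, q, hpq, -, rfl⟩ := (T.isDiag d hd).exists_lt
  have hS : S.Nonempty :=
    ⟨(p, q), mem_filter.2 ⟨mem_univ _, hpq, hd, show 0 < p by simp at h0; omega⟩⟩
  obtain ⟨⟨a, b⟩, habS, hmax⟩ := S.exists_max_image (fun pq => pq.2.val - pq.1.val) hS
  obtain ⟨-, hab, hmem, ha⟩ := mem_filter.1 habS
  dsimp only at hab hmem ha
  have hb := (T.ne_and_not_bdryAdj_of_mem hmem).2
  rw [bdryAdj_iff] at hb
  obtain ⟨x, hax, hxb, eax, exb⟩ := T.exists_apex (by omega) hmem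
  obtain ⟨e0a, e0b⟩ := isEdge_zero_of_maxSpan ha hab hmem
    fun p q hpq hmem hp => hmax (p, q) (mem_filter.2 ⟨mem_univ _, hpq, hmem, hp⟩)
  let Q : IsQuad T 0 a x b := ⟨ha, hax, hxb, hmem, e0a, eax, exb, e0b⟩
  refine ⟨Q.flip, ⟨a, b, x, 0, Q.isFlip⟩, ?_⟩
  have hmem' : {a, b} ∈ T.diags.filter (0 ∉ ·) :=
    mem_filter.2 ⟨hmem, by simp only [mem_insert, mem_singleton]; omega⟩
  rw [show Q.flip.diags = insert {x, 0} (T.diags.erase {a, b}) from rfl, filter_insert,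
    if_neg (by simp), filter_erase]
  exact card_erase_lt_of_mem hmem'

theorem exists_reflTransGen_fan (T : Triangulation (n + 1)) :
    ∃ F : Triangulation (n + 1), (∀ d ∈ F.diags, 0 ∈ d) ∧ ReflTransGen Flip T F := by
  induction hk : (T.diags.filter (0 ∉ ·)).card using Nat.strong_induction_on generalizing T with
  | _ k ih =>
    by_cases hfan : ∀ d ∈ T.diags, 0 ∈ d
    · exact ⟨T, hfan, .refl⟩
    push Not at hfan
    obtain ⟨d, hd, h0⟩ := hfan
    obtain ⟨T', hflip, hlt⟩ := exists_flip_card_lt hd h0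
    obtain ⟨F, hF, hT'F⟩ := ih _ (hk ▸ hlt) T' rfl
    exact ⟨F, hF, .head hflip hT'F⟩

theorem reflTransGen_flip (T₁ T₂ : Triangulation N) : ReflTransGen Flip T₁ T₂ := by
  rcases N with _ | n
  · have empty : ∀ T : Triangulation 0, T.diags = ∅ := fun T =>
      eq_empty_of_forall_notMem fun d hd => (T.isDiag d hd).elim fun i _ => i.elim0
    rw [ext ((empty T₁).trans (empty T₂).symm)]
  · obtain ⟨F₁, hF₁, h₁⟩ := exists_reflTransGen_fan T₁
    obtain ⟨F₂, hF₂, h₂⟩ := exists_reflTransGen_fan T₂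
    rw [eq_of_forall_mem hF₁ hF₂] at h₁
    exact h₁.trans (symm h₂)

end Fan

end Triangulation

/-- If `σ` is a single `m`-cycle on the `m` colours and `m` is odd, then any two
triangulations of the convex polygon, each with all triangles given the same
colour `c`, are connected by a sequence of `σ`-flips. -/
theorem odd_cycle_constant_colourings_connected (m : ℕ) (hm : Odd m)
    (σ : Equiv.Perm (Fin m)) (hσ : σ.IsCycle) (hsupp : σ.support = Finset.univ)
    (N : ℕ) (T₁ T₂ : Triangulation N) (c : Fin m) :
    Relation.ReflTransGen (SFlip σ)
      ⟨T₁, fun _ => c⟩ ⟨T₂, fun _ => c⟩ := by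
  have horder : orderOf σ = m := by rw [hσ.orderOf, hsupp, card_univ, Fintype.card_fin]
  have hσm : σ ^ m = 1 := by
    have h := pow_orderOf_eq_one σ
    rwa [horder] at h
  refine ReflTransGen.lift' (fun T => (⟨T, fun _ => c⟩ : ColouredTri N m)) ?_ T₁ T₂
    (Triangulation.reflTransGen_flip T₁ T₂)
  rintro T T' ⟨a, b, x, y, F⟩
  exact F.reflTransGen_sflip hm (by rw [hσm, Equiv.Perm.one_apply])

end PolyFlip
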